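/- arXiv:2205.05647 — 3 statements merged into one kernel-verified Lean document; each statement's English description precedes it below -/
import Mathlib

section
/- Let φ : ℝ → ℝ admit a representation as a difference of tropical signomials, and let (f₁, g₁) and (f₂, g₂) be two minimal representations of φ (i.e. each minimizes both mlen(f) and mlen(g) over all representations (f, g) of φ). Then f₁ − f₂ is an affine function (equivalently, g₁ − g₂ is affine); that is, the minimal representation is unique up to adding a common affine function to both entries. -/
/-- A tropical signomial: the pointwise maximum of a nonempty finite family of affine
functions. -/
def IsTropSig {E : Type*} [AddCommGroup E] [Module ℝ E] (f : E → ℝ) : Prop :=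
  ∃ (A : Finset (E →ᵃ[ℝ] ℝ)) (h : A.Nonempty), ∀ x, f x = A.sup' h (fun a => a x)

/-- The monomial length of a tropical signomial: the minimum cardinality of a finite set of
affine functions whose pointwise maximum is `f`. -/
noncomputable def mlen {E : Type*} [AddCommGroup E] [Module ℝ E] (f : E → ℝ) : ℕ :=
  sInf {k | ∃ (A : Finset (E →ᵃ[ℝ] ℝ)) (h : A.Nonempty),
    A.card = k ∧ ∀ x, f x = A.sup' h (fun a => a x)}

/-- The factorization length of a tropical signomial: the minimum over all decompositions
`f = f₁ + ⋯ + f_m` into tropical signomials of `(Σᵢ mlen fᵢ) − (m − 1)`. -/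
noncomputable def flen {E : Type*} [AddCommGroup E] [Module ℝ E] (f : E → ℝ) : ℕ :=
  sInf {k | ∃ (m : ℕ) (_ : 0 < m) (F : Fin m → E → ℝ),
    (∀ i, IsTropSig (F i)) ∧ (∀ x, f x = ∑ i, F i x) ∧
    k = (∑ i, mlen (F i)) - (m - 1)}

/-- `(f, g)` is a representation of `φ` as a difference of tropical signomials. -/
def IsRep {E : Type*} [AddCommGroup E] [Module ℝ E] (φ f g : E → ℝ) : Prop :=
  IsTropSig f ∧ IsTropSig g ∧ ∀ x, φ x = f x - g x

/-- A representation is minimal if its two monomial lengths are simultaneously minimal among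
all representations of `φ`. -/
def IsMinimalRep {E : Type*} [AddCommGroup E] [Module ℝ E] (φ f₀ g₀ : E → ℝ) : Prop :=
  IsRep φ f₀ g₀ ∧ ∀ f g : E → ℝ, IsRep φ f g → mlen f₀ ≤ mlen f ∧ mlen g₀ ≤ mlen g

/-! A one-variable tropical signomial is exactly a function `m x + b + ∑ₜ j t (x - t)⁺` with
finitely supported weights `j ≥ 0`; the weights are determined by the function, and the monomial
length is the number of breakpoints plus one. Writing `φ = f - g` in this form, `φ` determines
`d = j_f - j_g`, and `j_f, j_g ≥ 0` force `supp d⁺ ⊆ supp j_f` and `supp d⁻ ⊆ supp j_g`. The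
representation `(m x + b + ∑ₜ d⁺ t (x - t)⁺, ∑ₜ d⁻ t (x - t)⁺)` attains both bounds, so in a minimal
representation the supports coincide, which forces `j_f = d⁺`. Hence the convex parts of two
minimal representations differ by an affine function. -/

open Finset

lemma Finset.exists_forall_lt {α : Type*} [LinearOrder α] [NoMinOrder α] [Nonempty α]
    (S : Finset α) : ∃ a, ∀ s ∈ S, a < s := by
  obtain ⟨L, hL⟩ := S.bddBelow
  obtain ⟨a, ha⟩ := exists_lt L
  exact ⟨a, fun s hs => ha.trans_le (hL hs)⟩

/-- The last knot of `insert u₀ S` at or below `x`, or `u₀` if there is none. -/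
lemma exists_mem_insert_forall_le_iff {α : Type*} [LinearOrder α] {S : Finset α} {u₀ : α}
    (hu₀ : ∀ s ∈ S, u₀ < s) (x : α) :
    ∃ u ∈ insert u₀ S, ∀ s ∈ S, s ≤ x ↔ s ≤ u := by
  by_cases h : ((insert u₀ S).filter (· ≤ x)).Nonempty
  · have hmax := mem_filter.mp (max'_mem _ h)
    exact ⟨_, hmax.1, fun s hs =>
      ⟨fun hsx => le_max' _ s (mem_filter.mpr ⟨mem_insert_of_mem hs, hsx⟩), hmax.2.trans'⟩⟩
  · exact ⟨u₀, mem_insert_self _ _, fun s hs => iff_of_false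
      (fun hsx => h ⟨s, mem_filter.mpr ⟨mem_insert_of_mem hs, hsx⟩⟩) (not_le.mpr (hu₀ s hs))⟩

lemma exists_pos_forall_lt_abs_sub (S : Finset ℝ) (t : ℝ) :
    ∃ ε > 0, ∀ s ∈ S, s ≠ t → ε < |s - t| := by
  obtain ⟨ε, hε, hball⟩ := Metric.isOpen_iff.mp (S.erase t).finite_toSet.isClosed.isOpen_compl t
    (by simp)
  refine ⟨ε / 2, half_pos hε, fun s hs hst => ?_⟩
  by_contra! h
  exact hball (by rw [Metric.mem_ball, Real.dist_eq]; linarith) (by simp [hs, hst])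

lemma sum_mul_sub (T : Finset ℝ) (c : ℝ → ℝ) (x : ℝ) :
    ∑ s ∈ T, c s * (x - s) = (∑ s ∈ T, c s) * x - ∑ s ∈ T, c s * s := by
  rw [sum_mul, ← sum_sub_distrib]
  simp only [mul_sub, mul_comm]

noncomputable def affineOfSlope (m b : ℝ) : ℝ →ᵃ[ℝ] ℝ :=
  m • AffineMap.id ℝ ℝ + AffineMap.const ℝ ℝ b

@[simp] lemma affineOfSlope_apply (m b x : ℝ) : affineOfSlope m b x = m * x + b := by
  simp [affineOfSlope]

lemma affine_apply_sub_apply (a : ℝ →ᵃ[ℝ] ℝ) (x y : ℝ) : a x - a y = a.linear 1 * (x - y) := by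
  rw [← vsub_eq_sub, ← a.linearMap_vsub, vsub_eq_sub, mul_comm, ← smul_eq_mul,
    ← a.linear.map_smul, smul_eq_mul, mul_one]

lemma affine_apply_eq (a : ℝ →ᵃ[ℝ] ℝ) (x : ℝ) : a x = a.linear 1 * x + a 0 := by
  linarith [affine_apply_sub_apply a x 0]

lemma exists_mem_slope_eq_of_sup'_eq {A : Finset (ℝ →ᵃ[ℝ] ℝ)} (hA : A.Nonempty) {u v p q : ℝ}
    (huv : u < v) (hf : ∀ x ∈ Set.Ioo u v, (A.sup' hA fun a => a x) = p * x + q) :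
    ∃ a ∈ A, a.linear 1 = p := by
  by_contra! h
  -- each member of slope `≠ p` meets the line `p x + q` at most once, yet some member meets it
  -- at every point of the infinite interval `(u, v)`
  refine Set.Ioo_infinite huv <| Set.Finite.subset
    (A.finite_toSet.biUnion (t := fun a => {x | a x = p * x + q}) fun a ha => ?_) fun x hx => ?_
  · refine Set.Subsingleton.finite fun x (hx : a x = p * x + q) y (hy : a y = p * y + q) => ?_
    have hxy : (a.linear 1 - p) * (x - y) = 0 := by
      linear_combination -affine_apply_sub_apply a x y + hx - hy
    exact sub_eq_zero.mp ((mul_eq_zero.mp hxy).resolve_left (sub_ne_zero.mpr (h a ha)))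
  · obtain ⟨a, ha, hax⟩ := exists_mem_eq_sup' hA fun a => a x
    exact Set.mem_biUnion ha ((hax.symm.trans (hf x hx) : a x = p * x + q))

lemma monotone_sub_sup' {A : Finset (ℝ →ᵃ[ℝ] ℝ)} (hA : A.Nonempty) (a₀ : ℝ →ᵃ[ℝ] ℝ)
    (hslope : ∀ a ∈ A, a.linear 1 ≤ a₀.linear 1) :
    Monotone fun x => a₀ x - A.sup' hA fun a => a x := by
  intro x y hxy
  obtain ⟨a, ha, hay⟩ := exists_mem_eq_sup' hA fun a => a y
  have hax := le_sup' (fun a : ℝ →ᵃ[ℝ] ℝ => a x) ha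
  have := mul_le_mul_of_nonneg_right (hslope a ha) (sub_nonneg.mpr hxy)
  have := affine_apply_sub_apply a y x
  have := affine_apply_sub_apply a₀ y x
  simp only at hay hax ⊢
  linarith

noncomputable def hingeSum (j : ℝ →₀ ℝ) (x : ℝ) : ℝ := j.sum fun s c => c * (x - s)⁺

def HasHingeForm (f : ℝ → ℝ) (m b : ℝ) (j : ℝ →₀ ℝ) : Prop :=
  0 ≤ j ∧ ∀ x, f x = m * x + b + hingeSum j x

section hingeSum

variable (j : ℝ →₀ ℝ)

lemma hingeSum_eq_sum (x : ℝ) : hingeSum j x = ∑ s ∈ j.support, j s * (x - s)⁺ := rfl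

@[simp] lemma hingeSum_zero (x : ℝ) : hingeSum 0 x = 0 := by simp [hingeSum]

lemma hingeSum_add (j' : ℝ →₀ ℝ) (x : ℝ) : hingeSum (j + j') x = hingeSum j x + hingeSum j' x :=
  Finsupp.sum_add_index' (by simp) (fun _ _ _ => add_mul _ _ _)

lemma hingeSum_sub (j' : ℝ →₀ ℝ) (x : ℝ) : hingeSum (j - j') x = hingeSum j x - hingeSum j' x :=
  Finsupp.sum_sub_index (fun _ _ _ => sub_mul _ _ _)

lemma hingeSum_single (t c x : ℝ) : hingeSum (Finsupp.single t c) x = c * (x - t)⁺ :=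
  Finsupp.sum_single_index (zero_mul _)

lemma hingeSum_filter (p : ℝ → Prop) [DecidablePred p] (x : ℝ) :
    hingeSum (j.filter p) x = ∑ s ∈ j.support with p s, j s * (x - s)⁺ := by
  rw [hingeSum, Finsupp.sum_filter_index, Finsupp.support_filter]

lemma continuous_hingeSum : Continuous (hingeSum j) :=
  continuous_finsetSum _ fun _ _ =>
    continuous_const.mul ((continuous_id.sub continuous_const).max continuous_const)

lemma hingeSum_eq_sum_of_iff (p : ℝ → Prop) [DecidablePred p] {x : ℝ}
    (hp : ∀ s ∈ j.support, s ≤ x ↔ p s) :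
    hingeSum j x = ∑ s ∈ j.support with p s, j s * (x - s) := by
  rw [hingeSum_eq_sum, sum_filter]
  refine sum_congr rfl fun s hs => ?_
  split_ifs with h
  · rw [posPart_eq_self.mpr (sub_nonneg.mpr ((hp s hs).mpr h))]
  · rw [posPart_eq_zero.mpr (by linarith [not_le.mp (mt (hp s hs).mp h)]), mul_zero]

lemma sum_filter_le_hingeSum (hj : 0 ≤ j) (p : ℝ → Prop) [DecidablePred p] (x : ℝ) :
    ∑ s ∈ j.support with p s, j s * (x - s) ≤ hingeSum j x :=
  calc ∑ s ∈ j.support with p s, j s * (x - s)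
      ≤ ∑ s ∈ j.support with p s, j s * (x - s)⁺ :=
        sum_le_sum fun s _ => mul_le_mul_of_nonneg_left (le_posPart _) (hj s)
    _ ≤ hingeSum j x :=
        sum_le_sum_of_subset_of_nonneg (filter_subset _ _)
          fun s _ _ => mul_nonneg (hj s) (posPart_nonneg _)

lemma hingeSum_filter_lt_of_le {t x : ℝ} (hx : x ≤ t) :
    hingeSum (j.filter (· < t)) x = hingeSum j x := by
  rw [hingeSum_filter, hingeSum_eq_sum, sum_filter]
  refine sum_congr rfl fun s _ => ?_
  split_ifs with hs
  · rfl
  · rw [posPart_eq_zero.mpr (by linarith [not_lt.mp hs]), mul_zero]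

lemma hingeSum_filter_lt_of_ge {t x : ℝ} (hx : t ≤ x) :
    hingeSum (j.filter (· < t)) x = ∑ s ∈ j.support with s < t, j s * (x - s) := by
  rw [hingeSum_filter]
  exact sum_congr rfl fun s hs => by
    rw [posPart_eq_self.mpr (by linarith [(mem_filter.mp hs).2])]

end hingeSum

lemma HasHingeForm.continuous {f : ℝ → ℝ} {m b : ℝ} {j : ℝ →₀ ℝ} (hf : HasHingeForm f m b j) :
    Continuous f := by
  rw [funext hf.2]
  exact ((continuous_const.mul continuous_id).add continuous_const).add (continuous_hingeSum j)

lemma HasHingeForm.glue {g F : ℝ → ℝ} {m b : ℝ} {j : ℝ →₀ ℝ} (hg : HasHingeForm g m b j)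
    (a : ℝ →ᵃ[ℝ] ℝ) (t : ℝ) (hleft : ∀ x ≤ t, F x = g x ∧ a x ≤ g x)
    (hright : ∀ x, t ≤ x → F x = a x) :
    HasHingeForm F m b (j.filter (· < t) +
      Finsupp.single t (a.linear 1 - (m + ∑ s ∈ j.support with s < t, j s))) := by
  set L : ℝ → ℝ := fun x => ∑ s ∈ j.support with s < t, j s * (x - s)
  have hL : ∀ x y, L x - L y = (∑ s ∈ j.support with s < t, j s) * (x - y) := fun x y => by
    simp only [L, sum_mul_sub]; ring
  have hgt : g t = m * t + b + L t := by
    rw [hg.2, ← hingeSum_filter_lt_of_le j le_rfl, hingeSum_filter_lt_of_ge j le_rfl]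
  have hat : a t = g t := (hright t le_rfl).symm.trans (hleft t le_rfl).1
  have hjump : 0 ≤ a.linear 1 - (m + ∑ s ∈ j.support with s < t, j s) := by
    -- compare the slopes of `a` and `g` on a breakpoint-free interval `(t - ε, t)`
    obtain ⟨ε, hε, hsep⟩ := exists_pos_forall_lt_abs_sub j.support t
    have hgε : g (t - ε) = m * (t - ε) + b + L (t - ε) := by
      rw [hg.2, hingeSum_eq_sum_of_iff j (· < t) fun s hs => ?_]
      rcases eq_or_ne s t with rfl | hst
      · exact iff_of_false (by linarith) (lt_irrefl s)
      · have hεs := hsep s hs hst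
        refine ⟨fun h => by linarith, fun h => ?_⟩
        rw [abs_sub_comm, abs_of_pos (sub_pos.mpr h)] at hεs
        linarith
    have hbelow := (hleft (t - ε) (by linarith)).2
    nlinarith [affine_apply_sub_apply a t (t - ε), hL t (t - ε)]
  refine ⟨add_nonneg (fun s => ?_) (Finsupp.single_nonneg.mpr hjump), fun x => ?_⟩
  · rw [Finsupp.filter_apply]
    split_ifs
    exacts [hg.1 s, le_rfl]
  rw [hingeSum_add, hingeSum_single]
  rcases le_total x t with hx | hx
  · rw [(hleft x hx).1, hg.2, hingeSum_filter_lt_of_le j hx,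
      posPart_eq_zero.mpr (by linarith), mul_zero, add_zero]
  · rw [hright x hx, hingeSum_filter_lt_of_ge j hx, posPart_eq_self.mpr (by linarith)]
    change a x = m * x + b + (L x + _)
    linear_combination affine_apply_sub_apply a x t + hat + hgt - hL x t

lemma HasHingeForm.exists_max {g : ℝ → ℝ} {m b : ℝ} {j : ℝ →₀ ℝ} (hg : HasHingeForm g m b j)
    (a : ℝ →ᵃ[ℝ] ℝ) (hmono : Monotone fun x => a x - g x) :
    ∃ m' b' j', HasHingeForm (fun x => max (a x) (g x)) m' b' j' := by
  by_cases hbelow : ∀ x, a x ≤ g x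
  · exact ⟨m, b, j, hg.1, fun x => (max_eq_right (hbelow x)).trans (hg.2 x)⟩
  by_cases habove : ∀ x, g x ≤ a x
  · exact ⟨a.linear 1, a 0, 0, le_rfl, fun x =>
      (max_eq_left (habove x)).trans (by simp [affine_apply_eq a x])⟩
  push Not at hbelow habove
  obtain ⟨z, hz⟩ := hbelow
  obtain ⟨w, hw⟩ := habove
  obtain ⟨t, ht⟩ : ∃ t, a t - g t = 0 :=
    intermediate_value_univ w z (f := fun x => a x - g x)
      (a.continuous_of_finiteDimensional.sub hg.continuous) ⟨by linarith, by linarith⟩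
  refine ⟨_, _, _, hg.glue a t (fun x hx => ?_) (fun x hx => ?_)⟩
  · have hax : a x ≤ g x := by linarith [hmono hx]
    exact ⟨max_eq_right hax, hax⟩
  · exact max_eq_left (by linarith [hmono hx])

/-- Adding the affine functions in order of increasing slope, each new one overtakes the
current maximum at most once. -/
lemma exists_hasHingeForm_sup' (A : Finset (ℝ →ᵃ[ℝ] ℝ)) (hA : A.Nonempty) :
    ∃ m b j, HasHingeForm (fun x => A.sup' hA fun a => a x) m b j := by
  classical
  revert hA
  refine A.induction_on_max_value (fun a => a.linear 1) (fun h => absurd h not_nonempty_empty)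
    fun a A _ hmax ih _ => ?_
  rcases A.eq_empty_or_nonempty with rfl | hA
  · exact ⟨a.linear 1, a 0, 0, le_rfl, fun x => by simp [affine_apply_eq a x]⟩
  obtain ⟨m, b, j, hg⟩ := ih hA
  simp only [sup'_insert hA]
  exact hg.exists_max a (monotone_sub_sup' hA a hmax)

lemma IsTropSig.exists_hasHingeForm {f : ℝ → ℝ} (hf : IsTropSig f) :
    ∃ m b j, HasHingeForm f m b j := by
  obtain ⟨A, hA, hfA⟩ := hf
  rw [funext hfA]
  exact exists_hasHingeForm_sup' A hA

/-- The affine piece of `x ↦ m x + b + hingeSum j x` just to the right of `u`. -/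
noncomputable def hingePiece (m b : ℝ) (j : ℝ →₀ ℝ) (u : ℝ) : ℝ →ᵃ[ℝ] ℝ :=
  affineOfSlope (m + ∑ s ∈ j.support with s ≤ u, j s) (b - ∑ s ∈ j.support with s ≤ u, j s * s)

lemma hingePiece_apply (m b : ℝ) (j : ℝ →₀ ℝ) (u x : ℝ) :
    hingePiece m b j u x = m * x + b + ∑ s ∈ j.support with s ≤ u, j s * (x - s) := by
  rw [hingePiece, affineOfSlope_apply, sum_mul_sub]
  ring

section mlen

variable {f : ℝ → ℝ} {m b : ℝ} {j : ℝ →₀ ℝ}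

lemma HasHingeForm.exists_card_le (hf : HasHingeForm f m b j) :
    ∃ (A : Finset (ℝ →ᵃ[ℝ] ℝ)) (hA : A.Nonempty),
      #A ≤ #j.support + 1 ∧ ∀ x, f x = A.sup' hA fun a => a x := by
  classical
  obtain ⟨u₀, hu₀⟩ := j.support.exists_forall_lt
  refine ⟨(insert u₀ j.support).image (hingePiece m b j), (insert_nonempty _ _).image _,
    card_image_le.trans (card_insert_le _ _), fun x => le_antisymm ?_ ?_⟩
  · obtain ⟨u, hu, hux⟩ := exists_mem_insert_forall_le_iff hu₀ x
    rw [hf.2, hingeSum_eq_sum_of_iff j (· ≤ u) hux, ← hingePiece_apply]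
    exact le_sup' (fun a : ℝ →ᵃ[ℝ] ℝ => a x) (mem_image_of_mem _ hu)
  · refine sup'_le _ _ fun a ha => ?_
    obtain ⟨u, -, rfl⟩ := mem_image.mp ha
    rw [hingePiece_apply, hf.2]
    linarith [sum_filter_le_hingeSum j hf.1 (· ≤ u : ℝ → Prop) x]

lemma HasHingeForm.isTropSig (hf : HasHingeForm f m b j) : IsTropSig f :=
  let ⟨A, hA, _, hfA⟩ := hf.exists_card_le
  ⟨A, hA, hfA⟩

/-- Just to the right of each of the `#j.support + 1` knots the maximum has a different slope,
which must be the slope of one of its members. -/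
lemma HasHingeForm.card_le {A : Finset (ℝ →ᵃ[ℝ] ℝ)} (hA : A.Nonempty)
    (hf : HasHingeForm (fun x => A.sup' hA fun a => a x) m b j) : #j.support + 1 ≤ #A := by
  obtain ⟨u₀, hu₀⟩ := j.support.exists_forall_lt
  set σ : ℝ → ℝ := fun u => m + ∑ s ∈ j.support with s ≤ u, j s
  have hσ : StrictMonoOn σ (insert u₀ j.support : Finset ℝ) := by
    intro u hu v hv huv
    have hu₀u : u₀ ≤ u := by
      rcases mem_insert.mp hu with rfl | hu
      exacts [le_rfl, (hu₀ u hu).le]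
    have hv : v ∈ j.support := (mem_insert.mp hv).resolve_left (by linarith)
    have hsub : j.support.filter (· ≤ u) ⊆ j.support.filter (· ≤ v) := fun s hs =>
      mem_filter.mpr ⟨(mem_filter.mp hs).1, (mem_filter.mp hs).2.trans huv.le⟩
    exact add_lt_add_right (sum_lt_sum_of_subset hsub (mem_filter.mpr ⟨hv, le_rfl⟩)
      (fun hvu => by linarith [(mem_filter.mp hvu).2])
      ((hf.1 v).lt_of_ne (Finsupp.mem_support_iff.mp hv).symm) fun s _ _ => hf.1 s) m
  have hσA : ∀ u ∈ insert u₀ j.support, σ u ∈ A.image fun a => a.linear 1 := by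
    intro u _
    obtain ⟨ε, hε, hsep⟩ := exists_pos_forall_lt_abs_sub j.support u
    obtain ⟨a, ha, hslope⟩ := exists_mem_slope_eq_of_sup'_eq hA (lt_add_of_pos_right u hε)
      fun x hx => (hf.2 x).trans <| by
        rw [hingeSum_eq_sum_of_iff j (· ≤ u) fun s hs => ⟨fun hsx => ?_, fun hsu => ?_⟩,
          ← hingePiece_apply, hingePiece, affineOfSlope_apply]
        · by_contra! hus
          have := hsep s hs hus.ne'
          rw [abs_of_pos (sub_pos.mpr hus)] at this
          linarith [hx.2]
        · exact hsu.trans hx.1.le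
    exact mem_image.mpr ⟨a, ha, hslope⟩
  calc #j.support + 1 = #(insert u₀ j.support) :=
        (card_insert_of_notMem fun h => lt_irrefl _ (hu₀ _ h)).symm
    _ ≤ #(A.image fun a => a.linear 1) := card_le_card_of_injOn σ hσA hσ.injOn
    _ ≤ #A := card_image_le

lemma HasHingeForm.mlen_eq (hf : HasHingeForm f m b j) : mlen f = #j.support + 1 := by
  obtain ⟨A, hA, hcard, hfA⟩ := hf.exists_card_le
  have hmem : ∃ (B : Finset (ℝ →ᵃ[ℝ] ℝ)) (hB : B.Nonempty),
      #B = #A ∧ ∀ x, f x = B.sup' hB fun a => a x := ⟨A, hA, rfl, hfA⟩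
  refine le_antisymm ((Nat.sInf_le hmem).trans hcard) (le_csInf ⟨#A, hmem⟩ ?_)
  rintro k ⟨B, hB, rfl, hfB⟩
  exact HasHingeForm.card_le (m := m) (b := b) hB ⟨hf.1, fun x => (hfB x).symm.trans (hf.2 x)⟩

end mlen

/-- The second difference of `hingeSum k` at `t`, with a step `ε` below the distance from `t`
to the other breakpoints, is `k t * ε`; affine functions have none. -/
lemma eq_zero_of_affine_add_hingeSum_eq_zero {m b : ℝ} {k : ℝ →₀ ℝ}
    (h : ∀ x, m * x + b + hingeSum k x = 0) : k = 0 := by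
  ext t
  obtain ⟨ε, hε, hsep⟩ := exists_pos_forall_lt_abs_sub k.support t
  have hterm : ∀ s ∈ k.support, k s * ((t + ε - s)⁺ + (t - ε - s)⁺ - 2 * (t - s)⁺) =
      if s = t then k s * ε else 0 := by
    intro s hs
    split_ifs with hst
    · subst hst
      rw [posPart_eq_self.mpr (by linarith), posPart_eq_zero.mpr (by linarith), sub_self,
        posPart_zero]
      ring
    · rcases lt_abs.mp (hsep s hs hst) with hts | hst
      · rw [posPart_eq_zero.mpr (by linarith), posPart_eq_zero.mpr (by linarith),
          posPart_eq_zero.mpr (by linarith)]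
        ring
      · rw [posPart_eq_self.mpr (by linarith), posPart_eq_self.mpr (by linarith),
          posPart_eq_self.mpr (by linarith)]
        ring
  have hdiff : hingeSum k (t + ε) + hingeSum k (t - ε) - 2 * hingeSum k t = k t * ε := by
    rw [hingeSum_eq_sum, hingeSum_eq_sum, hingeSum_eq_sum, mul_sum, ← sum_add_distrib,
      ← sum_sub_distrib, sum_congr rfl (g := fun s => if s = t then k s * ε else 0)
        fun s hs => by rw [← hterm s hs]; ring, sum_ite_eq']
    split_ifs with ht
    · rfl
    · rw [Finsupp.notMem_support_iff.mp ht, zero_mul]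
  have hkt : k t * ε = 0 := by
    linear_combination -hdiff + h (t + ε) + h (t - ε) - 2 * h t
  simpa [hε.ne'] using hkt

lemma eq_of_affine_add_hingeSum_eq {m b m' b' : ℝ} {j j' : ℝ →₀ ℝ}
    (h : ∀ x, m * x + b + hingeSum j x = m' * x + b' + hingeSum j' x) : j = j' :=
  sub_eq_zero.mp <| eq_zero_of_affine_add_hingeSum_eq_zero (m := m - m') (b := b - b') fun x => by
    rw [hingeSum_sub]
    linear_combination h x

namespace Finsupp

variable {ι : Type*}

lemma posPart_apply (d : ι →₀ ℝ) (t : ι) : d⁺ t = (d t)⁺ := by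
  rw [posPart_def, sup_apply, posPart_def]
  rfl

lemma negPart_apply (d : ι →₀ ℝ) (t : ι) : d⁻ t = (d t)⁻ := by
  rw [negPart_def, sup_apply, negPart_def]
  rfl

lemma mem_support_posPart (d : ι →₀ ℝ) (t : ι) : t ∈ d⁺.support ↔ 0 < d t := by
  rw [mem_support_iff, posPart_apply, ne_eq, posPart_eq_zero, not_le]

lemma mem_support_negPart (d : ι →₀ ℝ) (t : ι) : t ∈ d⁻.support ↔ d t < 0 := by
  rw [mem_support_iff, negPart_apply, ne_eq, negPart_eq_zero, not_le]

lemma eq_posPart_of_card_support_le {d p n : ι →₀ ℝ} (hp : 0 ≤ p) (hn : 0 ≤ n) (hd : p - n = d)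
    (hpd : #p.support ≤ #d⁺.support) (hnd : #n.support ≤ #d⁻.support) : p = d⁺ := by
  have hp' : ∀ t, 0 ≤ p t := hp
  have hn' : ∀ t, 0 ≤ n t := hn
  have hdt : ∀ t, p t - n t = d t := fun t => by rw [← hd, sub_apply]
  have hsp : d⁺.support = p.support := eq_of_subset_of_card_le (fun t ht => by
    rw [mem_support_posPart] at ht
    exact mem_support_iff.mpr (by linarith [hdt t, hn' t])) hpd
  have hsn : d⁻.support = n.support := eq_of_subset_of_card_le (fun t ht => by
    rw [mem_support_negPart] at ht
    exact mem_support_iff.mpr (by linarith [hdt t, hp' t])) hnd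
  ext t
  rw [posPart_apply]
  by_cases ht : 0 < d t
  · have hnt : n t = 0 := notMem_support_iff.mp fun h => by
      rw [← hsn, mem_support_negPart] at h
      linarith
    rw [posPart_eq_self.mpr ht.le, ← hdt, hnt, sub_zero]
  · have hpt : p t = 0 := notMem_support_iff.mp fun h => by
      rw [← hsp, mem_support_posPart] at h
      exact ht h
    rw [posPart_eq_zero.mpr (not_lt.mp ht), hpt]

end Finsupp

lemma IsRep.exists_hingeSum {φ f g : ℝ → ℝ} (h : IsRep φ f g) :
    ∃ m b d, ∀ x, φ x = m * x + b + hingeSum d x := by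
  obtain ⟨mf, bf, jf, hjf⟩ := h.1.exists_hasHingeForm
  obtain ⟨mg, bg, jg, hjg⟩ := h.2.1.exists_hasHingeForm
  exact ⟨mf - mg, bf - bg, jf - jg, fun x => by rw [h.2.2, hjf.2, hjg.2, hingeSum_sub]; ring⟩

lemma hasHingeForm_posPart (m b : ℝ) (d : ℝ →₀ ℝ) :
    HasHingeForm (fun x => m * x + b + hingeSum d⁺ x) m b d⁺ :=
  ⟨posPart_nonneg d, fun _ => rfl⟩

lemma hasHingeForm_negPart (d : ℝ →₀ ℝ) : HasHingeForm (hingeSum d⁻) 0 0 d⁻ :=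
  ⟨negPart_nonneg d, fun x => by simp⟩

lemma isRep_posPart_negPart {φ : ℝ → ℝ} {m b : ℝ} {d : ℝ →₀ ℝ}
    (hφ : ∀ x, φ x = m * x + b + hingeSum d x) :
    IsRep φ (fun x => m * x + b + hingeSum d⁺ x) (hingeSum d⁻) := by
  refine ⟨(hasHingeForm_posPart m b d).isTropSig, (hasHingeForm_negPart d).isTropSig, fun x => ?_⟩
  show _ = m * x + b + hingeSum d⁺ x - hingeSum d⁻ x
  rw [hφ, add_sub_assoc, ← hingeSum_sub, posPart_sub_negPart]

lemma IsMinimalRep.exists_hasHingeForm_posPart {φ f g : ℝ → ℝ} {m b : ℝ} {d : ℝ →₀ ℝ}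
    (h : IsMinimalRep φ f g) (hφ : ∀ x, φ x = m * x + b + hingeSum d x) :
    ∃ m' b', HasHingeForm f m' b' d⁺ := by
  obtain ⟨⟨hf, hg, hfg⟩, hmin⟩ := h
  obtain ⟨mf, bf, jf, hjf⟩ := hf.exists_hasHingeForm
  obtain ⟨mg, bg, jg, hjg⟩ := hg.exists_hasHingeForm
  have hd : jf - jg = d := eq_of_affine_add_hingeSum_eq (m := mf - mg) (b := bf - bg) fun x => by
    rw [hingeSum_sub, ← hφ, hfg, hjf.2, hjg.2]
    ring
  obtain ⟨hcf, hcg⟩ := hmin _ _ (isRep_posPart_negPart hφ)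
  rw [hjf.mlen_eq, (hasHingeForm_posPart m b d).mlen_eq] at hcf
  rw [hjg.mlen_eq, (hasHingeForm_negPart d).mlen_eq] at hcg
  exact ⟨mf, bf, Finsupp.eq_posPart_of_card_support_le hjf.1 hjg.1 hd (by omega) (by omega) ▸ hjf⟩

theorem minimal_representation_unique_one_var
    (φ f₁ g₁ f₂ g₂ : ℝ → ℝ)
    (h1 : IsMinimalRep φ f₁ g₁) (h2 : IsMinimalRep φ f₂ g₂) :
    (∃ ℓ : ℝ →ᵃ[ℝ] ℝ, ∀ x, f₁ x - f₂ x = ℓ x) ∧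
    (∃ ℓ : ℝ →ᵃ[ℝ] ℝ, ∀ x, g₁ x - g₂ x = ℓ x) := by
  obtain ⟨m, b, d, hφ⟩ := h1.1.exists_hingeSum
  obtain ⟨m₁, b₁, hf₁⟩ := h1.exists_hasHingeForm_posPart hφ
  obtain ⟨m₂, b₂, hf₂⟩ := h2.exists_hasHingeForm_posPart hφ
  set ℓ := affineOfSlope (m₁ - m₂) (b₁ - b₂)
  have hf : ∀ x, f₁ x - f₂ x = ℓ x := fun x => by
    rw [hf₁.2, hf₂.2, affineOfSlope_apply]
    ring
  exact ⟨⟨ℓ, hf⟩, ⟨ℓ, fun x => by linear_combination hf x + h1.1.2.2 x - h2.1.2.2 x⟩⟩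
end

section
/- Let φ : ℝ → ℝ be a difference of two tropical signomials in one variable. Then its non-differentiability set N(φ) is finite, at every t ∈ N(φ) the one-sided derivatives φ'₊(t) and φ'₋(t) exist, and, setting j(t) = φ'₊(t) − φ'₋(t), there exists an affine function ℓ : ℝ → ℝ such that φ(x) = ℓ(x) + Σ_{t ∈ N(φ)} j(t)·max(x − t, 0) for all x ∈ ℝ. -/
/-- The non-differentiability locus of `f`. -/
def Ndiff {E : Type*} [NormedAddCommGroup E] [NormedSpace ℝ E] (f : E → ℝ) : Set E :=
  {x | ¬ DifferentiableAt ℝ f x}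

/-!
On each side of a point, the maximum of finitely many affine functions coincides with the active
piece of extreme slope, so it is affine on both sides of every point, with equal one-sided slopes
away from the finitely many points where two pieces of different slopes cross. The same holds for a
difference `f - g`. Subtracting from it the hinge sum built from its slope jumps leaves a function
whose one-sided slopes agree everywhere; that function is locally affine, so its derivative is
locally constant on the connected line, and it is affine.
-/

open Set Filter Topology

def HasSlopeWithin (u : ℝ → ℝ) (M : ℝ) (s : Set ℝ) (x : ℝ) : Prop :=
  ∀ᶠ y in 𝓝[s] x, u y = u x + M * (y - x)

namespace HasSlopeWithin

variable {u v : ℝ → ℝ} {M N : ℝ} {s : Set ℝ} {x : ℝ}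

theorem sub (hu : HasSlopeWithin u M s x) (hv : HasSlopeWithin v N s x) :
    HasSlopeWithin (u - v) (M - N) s x := by
  filter_upwards [hu, hv] with y hu hv
  rw [Pi.sub_apply, Pi.sub_apply, hu, hv]
  ring

theorem const_mul (hu : HasSlopeWithin u M s x) (c : ℝ) :
    HasSlopeWithin (fun y => c * u y) (c * M) s x := by
  filter_upwards [hu] with y hu
  rw [hu]
  ring

theorem sum {ι : Type*} {F : ι → ℝ → ℝ} {M : ι → ℝ} (S : Finset ι)
    (h : ∀ i ∈ S, HasSlopeWithin (F i) (M i) s x) :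
    HasSlopeWithin (fun y => ∑ i ∈ S, F i y) (∑ i ∈ S, M i) s x := by
  filter_upwards [(eventually_all_finset S).2 h] with y hy
  rw [Finset.sum_congr rfl hy, Finset.sum_add_distrib, Finset.sum_mul]

theorem hasDerivWithinAt (h : HasSlopeWithin u M s x) : HasDerivWithinAt u M s x := by
  have hline : HasDerivAt (fun y => u x + M * (y - x)) M x := by
    simpa using (((hasDerivAt_id x).sub_const x).const_mul M).const_add (u x)
  exact hline.hasDerivWithinAt.congr_of_eventuallyEq h (by simp)

theorem univ_of_Ici_of_Iic (hR : HasSlopeWithin u M (Ici x) x)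
    (hL : HasSlopeWithin u M (Iic x) x) : HasSlopeWithin u M univ x := by
  rw [HasSlopeWithin, nhdsWithin_univ, ← nhdsLE_sup_nhdsGE]
  exact eventually_sup.2 ⟨hL, hR⟩

end HasSlopeWithin

theorem hasSlopeWithin_max_sub_Ici (t x : ℝ) :
    HasSlopeWithin (fun y => max (y - t) 0) (if t ≤ x then 1 else 0) (Ici x) x := by
  split_ifs with h
  · filter_upwards [self_mem_nhdsWithin] with y (hy : x ≤ y)
    rw [max_eq_left (by linarith), max_eq_left (by linarith)]
    ring
  · filter_upwards [nhdsWithin_le_nhds (Iio_mem_nhds (not_le.1 h))] with y (hy : y < t)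
    rw [max_eq_right (by linarith), max_eq_right (by linarith)]
    ring

theorem hasSlopeWithin_max_sub_Iic (t x : ℝ) :
    HasSlopeWithin (fun y => max (y - t) 0) (if t < x then 1 else 0) (Iic x) x := by
  split_ifs with h
  · filter_upwards [nhdsWithin_le_nhds (Ioi_mem_nhds h)] with y (hy : t < y)
    rw [max_eq_left (by linarith), max_eq_left (by linarith)]
    ring
  · filter_upwards [self_mem_nhdsWithin] with y (hy : y ≤ x)
    rw [max_eq_right (by linarith), max_eq_right (by linarith)]
    ring

theorem sum_mul_ite_le_sub_sum_mul_ite_lt (S : Finset ℝ) (j : ℝ → ℝ) (x : ℝ) :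
    (∑ t ∈ S, j t * if t ≤ x then 1 else 0) - (∑ t ∈ S, j t * if t < x then 1 else 0) =
      if x ∈ S then j x else 0 := by
  rw [← Finset.sum_sub_distrib, ← Finset.sum_ite_eq' S x j]
  refine Finset.sum_congr rfl fun t _ => ?_
  rcases lt_trichotomy t x with h | rfl | h
  · simp [h.le, h, h.ne]
  · simp
  · simp [not_le.2 h, not_lt.2 h.le, h.ne']

theorem differentiableAt_iff_of_hasDerivWithinAt_Ici_Iic {u : ℝ → ℝ} {R L x : ℝ}
    (hR : HasDerivWithinAt u R (Ici x) x) (hL : HasDerivWithinAt u L (Iic x) x) :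
    DifferentiableAt ℝ u x ↔ R = L := by
  refine ⟨fun hd => ?_, fun hRL => ?_⟩
  · rw [(uniqueDiffWithinAt_Ici x).eq_deriv _ hR hd.hasDerivAt.hasDerivWithinAt,
      (uniqueDiffWithinAt_Iic x).eq_deriv _ hL hd.hasDerivAt.hasDerivWithinAt]
  · have h := (hRL ▸ hL).union hR
    rw [Iic_union_Ici, hasDerivWithinAt_univ] at h
    exact h.differentiableAt

theorem exists_affineMap_eq_of_hasSlopeWithin_univ {w : ℝ → ℝ}
    (h : ∀ x, ∃ M, HasSlopeWithin w M univ x) : ∃ ℓ : ℝ →ᵃ[ℝ] ℝ, ∀ x, w x = ℓ x := by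
  choose M hM using h
  have hderiv : ∀ x, HasDerivAt w (M x) x :=
    fun x => hasDerivWithinAt_univ.1 (hM x).hasDerivWithinAt
  have hloc : IsLocallyConstant M := by
    refine (IsLocallyConstant.iff_eventually_eq M).2 fun x => ?_
    have hx := hM x
    rw [HasSlopeWithin, nhdsWithin_univ] at hx
    filter_upwards [hx.eventually_nhds] with y hy
    have hslope : HasSlopeWithin w (M x) univ y := by
      rw [HasSlopeWithin, nhdsWithin_univ]
      filter_upwards [hy] with z hz
      rw [hz, hy.self_of_nhds]
      ring
    exact (hderiv y).unique (hasDerivWithinAt_univ.1 hslope.hasDerivWithinAt)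
  have hzero : ∀ x, HasDerivAt (w - fun y => y * M 0) 0 x := fun x => by
    simpa [hloc.apply_eq_of_preconnectedSpace x 0] using
      (hderiv x).sub (hasDerivAt_mul_const (M 0))
  have hconst := is_const_of_deriv_eq_zero (fun x => (hzero x).differentiableAt)
    (fun x => (hzero x).deriv)
  refine ⟨(M 0 • LinearMap.id : ℝ →ₗ[ℝ] ℝ).toAffineMap + AffineMap.const ℝ ℝ (w 0),
    fun x => ?_⟩
  have := hconst x 0
  simp only [Pi.sub_apply, zero_mul, sub_zero] at this
  simp only [AffineMap.coe_add, LinearMap.coe_toAffineMap, AffineMap.coe_const, Pi.add_apply,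
    LinearMap.smul_apply, LinearMap.id_coe, id_eq, smul_eq_mul, Function.const_apply]
  linarith

theorem exists_affineMap_eq_add_of_jump_eq {u v Ru Lu Rv Lv : ℝ → ℝ}
    (hRu : ∀ x, HasSlopeWithin u (Ru x) (Ici x) x) (hLu : ∀ x, HasSlopeWithin u (Lu x) (Iic x) x)
    (hRv : ∀ x, HasSlopeWithin v (Rv x) (Ici x) x) (hLv : ∀ x, HasSlopeWithin v (Lv x) (Iic x) x)
    (hjump : ∀ x, Ru x - Lu x = Rv x - Lv x) : ∃ ℓ : ℝ →ᵃ[ℝ] ℝ, ∀ x, u x = ℓ x + v x := by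
  have hslope : ∀ x, HasSlopeWithin (u - v) (Ru x - Rv x) univ x := fun x => by
    refine ((hRu x).sub (hRv x)).univ_of_Ici_of_Iic ?_
    rw [show Ru x - Rv x = Lu x - Lv x by linarith [hjump x]]
    exact (hLu x).sub (hLv x)
  obtain ⟨ℓ, hℓ⟩ := exists_affineMap_eq_of_hasSlopeWithin_univ fun x => ⟨_, hslope x⟩
  exact ⟨ℓ, fun x => by rw [← hℓ x, Pi.sub_apply, sub_add_cancel]⟩

def IsPiecewiseAffine (u : ℝ → ℝ) : Prop :=
  ∃ T : Set ℝ, T.Finite ∧ ∀ x, ∃ R L, HasSlopeWithin u R (Ici x) x ∧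
    HasSlopeWithin u L (Iic x) x ∧ (x ∉ T → R = L)

theorem IsPiecewiseAffine.sub {u v : ℝ → ℝ} (hu : IsPiecewiseAffine u)
    (hv : IsPiecewiseAffine v) : IsPiecewiseAffine (u - v) := by
  obtain ⟨T, hT, hu⟩ := hu
  obtain ⟨T', hT', hv⟩ := hv
  refine ⟨T ∪ T', hT.union hT', fun x => ?_⟩
  obtain ⟨R, L, hR, hL, hRL⟩ := hu x
  obtain ⟨R', L', hR', hL', hRL'⟩ := hv x
  refine ⟨R - R', L - L', hR.sub hR', hL.sub hL', fun hx => ?_⟩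
  rw [hRL fun h => hx (Or.inl h), hRL' fun h => hx (Or.inr h)]

theorem IsPiecewiseAffine.exists_hinge_expansion {u : ℝ → ℝ} (hu : IsPiecewiseAffine u) :
    ∃ (S : Finset ℝ) (j : ℝ → ℝ) (ℓ : ℝ →ᵃ[ℝ] ℝ),
      (S : Set ℝ) = Ndiff u ∧
      (∀ t ∈ S, ∃ dR dL : ℝ, HasDerivWithinAt u dR (Ici t) t ∧
        HasDerivWithinAt u dL (Iic t) t ∧ j t = dR - dL) ∧
      (∀ x, u x = ℓ x + ∑ t ∈ S, j t * max (x - t) 0) := by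
  obtain ⟨T, hT, hslope⟩ := hu
  choose R L hR hL hRL using hslope
  have hndiff : ∀ x, x ∈ Ndiff u ↔ R x ≠ L x := fun x =>
    (differentiableAt_iff_of_hasDerivWithinAt_Ici_Iic (hR x).hasDerivWithinAt
      (hL x).hasDerivWithinAt).not
  have hfin : (Ndiff u).Finite :=
    hT.subset fun x hx => by_contra fun hxT => (hndiff x).1 hx (hRL x hxT)
  set S := hfin.toFinset
  have hjump : ∀ x, R x - L x = if x ∈ S then R x - L x else 0 := fun x => by
    split_ifs with hx
    · rfl
    · rw [sub_eq_zero]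
      by_contra hne
      exact hx (hfin.mem_toFinset.2 ((hndiff x).2 hne))
  obtain ⟨ℓ, hℓ⟩ := exists_affineMap_eq_add_of_jump_eq hR hL
    (fun x => HasSlopeWithin.sum S fun t _ => (hasSlopeWithin_max_sub_Ici t x).const_mul (R t - L t))
    (fun x => HasSlopeWithin.sum S fun t _ => (hasSlopeWithin_max_sub_Iic t x).const_mul (R t - L t))
    fun x => (hjump x).trans (sum_mul_ite_le_sub_sum_mul_ite_lt S (fun t => R t - L t) x).symm
  exact ⟨S, fun t => R t - L t, ℓ, hfin.coe_toFinset,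
    fun t _ => ⟨R t, L t, (hR t).hasDerivWithinAt, (hL t).hasDerivWithinAt, rfl⟩, hℓ⟩

theorem AffineMap.apply_eq_add_linear_one_mul (a : ℝ →ᵃ[ℝ] ℝ) (x y : ℝ) :
    a y = a x + a.linear 1 * (y - x) := by
  have hvsub := a.linearMap_vsub y x
  have hlin : a.linear (y - x) = (y - x) * a.linear 1 := by
    rw [← smul_eq_mul, ← a.linear.map_smul, smul_eq_mul, mul_one]
  rw [vsub_eq_sub, vsub_eq_sub, hlin] at hvsub
  linarith

theorem finite_crossings (A : Finset (ℝ →ᵃ[ℝ] ℝ)) :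
    {x | ∃ a ∈ A, ∃ b ∈ A, a.linear 1 ≠ b.linear 1 ∧ a x = b x}.Finite := by
  have hunion : {x | ∃ a ∈ A, ∃ b ∈ A, a.linear 1 ≠ b.linear 1 ∧ a x = b x} =
      ⋃ a ∈ A, ⋃ b ∈ A, {x | a.linear 1 ≠ b.linear 1 ∧ a x = b x} := by
    ext
    simp only [mem_ofPred_eq, mem_iUnion, exists_prop]
  rw [hunion]
  refine A.finite_toSet.biUnion fun a _ => A.finite_toSet.biUnion fun b _ => ?_
  refine Set.Subsingleton.finite ?_
  rintro x ⟨hne, hx⟩ y ⟨-, hy⟩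
  rw [a.apply_eq_add_linear_one_mul x y, b.apply_eq_add_linear_one_mul x y, hx] at hy
  have hprod : (a.linear 1 - b.linear 1) * (y - x) = 0 := by linarith
  rcases mul_eq_zero.1 hprod with h | h
  · exact absurd (sub_eq_zero.1 h) hne
  · linarith

theorem Finset.sup'_eventually_eq_of_eventually_le (A : Finset (ℝ →ᵃ[ℝ] ℝ)) (hA : A.Nonempty)
    {l : Filter ℝ} {x : ℝ} (hl : l ≤ 𝓝 x) {a₀ : ℝ →ᵃ[ℝ] ℝ} (ha₀ : a₀ ∈ A)
    (hx : a₀ x = A.sup' hA (· x)) (hact : ∀ a ∈ A, a x = a₀ x → ∀ᶠ y in l, a y ≤ a₀ y) :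
    ∀ᶠ y in l, A.sup' hA (· y) = a₀ y := by
  have hle : ∀ a ∈ A, ∀ᶠ y in l, a y ≤ a₀ y := by
    intro a ha
    rcases (hx ▸ A.le_sup' (· x) ha : a x ≤ a₀ x).eq_or_lt with h | h
    · exact hact a ha h
    · exact (a.continuous_of_finiteDimensional.continuousAt.eventually_lt
        a₀.continuous_of_finiteDimensional.continuousAt h).filter_mono hl |>.mono fun _ => le_of_lt
  filter_upwards [(eventually_all_finset A).2 hle] with y hy
  exact le_antisymm (A.sup'_le hA _ hy) (A.le_sup' (· y) ha₀)

theorem Finset.hasSlopeWithin_Ici_sup' (A : Finset (ℝ →ᵃ[ℝ] ℝ)) (hA : A.Nonempty) {x : ℝ}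
    {a₀ : ℝ →ᵃ[ℝ] ℝ} (ha₀ : a₀ ∈ A) (hx : a₀ x = A.sup' hA (· x))
    (hmax : ∀ a ∈ A, a x = a₀ x → a.linear 1 ≤ a₀.linear 1) :
    HasSlopeWithin (fun y => A.sup' hA (· y)) (a₀.linear 1) (Set.Ici x) x := by
  have hsup := A.sup'_eventually_eq_of_eventually_le hA nhdsWithin_le_nhds ha₀ hx
    fun a ha hax => by
      filter_upwards [self_mem_nhdsWithin] with y (hy : x ≤ y)
      rw [a.apply_eq_add_linear_one_mul x y, a₀.apply_eq_add_linear_one_mul x y, hax]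
      nlinarith [hmax a ha hax]
  filter_upwards [hsup] with y hy
  rw [hy, ← hx, a₀.apply_eq_add_linear_one_mul x y]

theorem Finset.hasSlopeWithin_Iic_sup' (A : Finset (ℝ →ᵃ[ℝ] ℝ)) (hA : A.Nonempty) {x : ℝ}
    {a₀ : ℝ →ᵃ[ℝ] ℝ} (ha₀ : a₀ ∈ A) (hx : a₀ x = A.sup' hA (· x))
    (hmin : ∀ a ∈ A, a x = a₀ x → a₀.linear 1 ≤ a.linear 1) :
    HasSlopeWithin (fun y => A.sup' hA (· y)) (a₀.linear 1) (Set.Iic x) x := by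
  have hsup := A.sup'_eventually_eq_of_eventually_le hA nhdsWithin_le_nhds ha₀ hx
    fun a ha hax => by
      filter_upwards [self_mem_nhdsWithin] with y (hy : y ≤ x)
      rw [a.apply_eq_add_linear_one_mul x y, a₀.apply_eq_add_linear_one_mul x y, hax]
      nlinarith [hmin a ha hax]
  filter_upwards [hsup] with y hy
  rw [hy, ← hx, a₀.apply_eq_add_linear_one_mul x y]

theorem IsTropSig.isPiecewiseAffine {f : ℝ → ℝ} (hf : IsTropSig f) : IsPiecewiseAffine f := by
  obtain ⟨A, hA, hfA⟩ := hf
  obtain rfl : f = fun y => A.sup' hA (· y) := funext hfA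
  refine ⟨_, finite_crossings A, fun x => ?_⟩
  set active := A.filter fun a => a x = A.sup' hA (· x)
  have hactive : active.Nonempty := by
    obtain ⟨a, ha, hax⟩ := A.exists_mem_eq_sup' hA (· x)
    exact ⟨a, Finset.mem_filter.2 ⟨ha, hax.symm⟩⟩
  obtain ⟨a, ha, hmax⟩ := active.exists_max_image (·.linear 1) hactive
  obtain ⟨b, hb, hmin⟩ := active.exists_min_image (·.linear 1) hactive
  rw [Finset.mem_filter] at ha hb
  refine ⟨a.linear 1, b.linear 1,
    A.hasSlopeWithin_Ici_sup' hA ha.1 ha.2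
      fun c hc hcx => hmax c (Finset.mem_filter.2 ⟨hc, hcx.trans ha.2⟩),
    A.hasSlopeWithin_Iic_sup' hA hb.1 hb.2
      fun c hc hcx => hmin c (Finset.mem_filter.2 ⟨hc, hcx.trans hb.2⟩),
    fun hx => ?_⟩
  by_contra hne
  exact hx ⟨a, ha.1, b, hb.1, hne, ha.2.trans hb.2.symm⟩

theorem difference_of_one_var_tropical_signomials_normal_form
    (φ f g : ℝ → ℝ) (hf : IsTropSig f) (hg : IsTropSig g)
    (hφ : ∀ x, φ x = f x - g x) :
    ∃ (S : Finset ℝ) (j : ℝ → ℝ) (ℓ : ℝ →ᵃ[ℝ] ℝ),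
      -- the non-differentiability set of φ is finite
      (S : Set ℝ) = Ndiff φ ∧
      -- one-sided derivatives exist at every nonsmooth point, and j is their jump
      (∀ t ∈ S, ∃ dR dL : ℝ, HasDerivWithinAt φ dR (Set.Ici t) t ∧
        HasDerivWithinAt φ dL (Set.Iic t) t ∧ j t = dR - dL) ∧
      -- φ is an affine function plus the weighted sum of the hinge functions at those points
      (∀ x, φ x = ℓ x + ∑ t ∈ S, j t * max (x - t) 0) := by
  obtain rfl : φ = f - g := funext hφ
  exact (hf.isPiecewiseAffine.sub hg.isPiecewiseAffine).exists_hinge_expansion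
end

section
/- Let f : ℝ^n → ℝ be a tropical signomial. Then each connected component of ℝ^n ∖ N(f) is an open convex set on which f agrees with an affine function, and the number of such connected components equals the monomial length mlen(f); in other words, the monomial length of a tropical signomial equals its number of linear regions. -/
/-!
Take a representation `f = max A` of minimal size. Each `a ∈ A` then strictly dominates the
other members of `A` on a nonempty open convex set `U a` (otherwise `a` could be dropped), and
on `U a` the function `f` agrees with `a`, so it is differentiable there. Two members of `A` that
each dominate somewhere have distinct linear parts, so at a point outside every `U a` two
affine minorants of `f` with different slopes touch `f`, and `f` is not differentiable there.
Hence the complement of `N(f)` is the disjoint union of the `|A|` open convex sets `U a`, which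
are therefore its connected components.
-/

open Set Filter Topology Function

section ConnectedComponents

variable {X ι : Type*} [TopologicalSpace X] {S : Set X} {U : ι → Set X}

theorem ConnectedComponents.coe_eq_coe_iff_mem_connectedComponentIn {x y : S} :
    (x : ConnectedComponents S) = y ↔ (x : X) ∈ connectedComponentIn S y := by
  rw [ConnectedComponents.coe_eq_coe', connectedComponentIn_eq_image y.2,
    Subtype.val_injective.mem_set_image]

theorem connectedComponentIn_eq_of_iUnion_eq (hS : ⋃ i, U i = S) (hopen : ∀ i, IsOpen (U i))
    (hconn : ∀ i, IsPreconnected (U i)) (hdisj : Pairwise (Disjoint on U)) {i : ι} {x : X}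
    (hx : x ∈ U i) : connectedComponentIn S x = U i := by
  have hUS : U i ⊆ S := hS ▸ subset_iUnion U i
  refine Subset.antisymm ?_ ((hconn i).subset_connectedComponentIn hx hUS)
  refine isPreconnected_connectedComponentIn.subset_left_of_subset_union (hopen i)
    (isOpen_biUnion fun j (_ : j ≠ i) => hopen j)
    (disjoint_iUnion₂_right.2 fun j hj => hdisj (Ne.symm hj)) ?_
    ⟨x, mem_connectedComponentIn (hUS hx), hx⟩
  intro y hy
  obtain ⟨j, hyj⟩ := mem_iUnion.1 (hS.symm ▸ connectedComponentIn_subset S x hy)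
  by_cases hji : j = i
  · exact Or.inl (hji ▸ hyj)
  · exact Or.inr (mem_biUnion hji hyj)

theorem nat_card_connectedComponents_of_iUnion_eq (hS : ⋃ i, U i = S)
    (hopen : ∀ i, IsOpen (U i)) (hconn : ∀ i, IsConnected (U i))
    (hdisj : Pairwise (Disjoint on U)) : Nat.card (ConnectedComponents S) = Nat.card ι := by
  have hUS : ∀ i, U i ⊆ S := fun i => hS ▸ subset_iUnion U i
  have hcomp : ∀ {i x}, x ∈ U i → connectedComponentIn S x = U i := fun hx =>
    connectedComponentIn_eq_of_iUnion_eq hS hopen (fun i => (hconn i).isPreconnected) hdisj hx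
  choose p hp using fun i => (hconn i).nonempty
  let φ : ι → ConnectedComponents S := fun i => ConnectedComponents.mk ⟨p i, hUS i (hp i)⟩
  refine (Nat.card_eq_of_bijective φ ⟨fun i j hij => ?_, fun c => ?_⟩).symm
  · rw [ConnectedComponents.coe_eq_coe_iff_mem_connectedComponentIn, hcomp (hp j)] at hij
    exact hdisj.eq (not_disjoint_iff.2 ⟨p i, hp i, hij⟩)
  · obtain ⟨⟨y, hy⟩, rfl⟩ := ConnectedComponents.surjective_coe c
    obtain ⟨i, hyi⟩ := mem_iUnion.1 (hS.symm ▸ hy)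
    refine ⟨i, ConnectedComponents.coe_eq_coe_iff_mem_connectedComponentIn.2 ?_⟩
    rw [hcomp hyi]
    exact hp i

end ConnectedComponents

section AffineMinorant

theorem AffineMap.hasFDerivAt_of_finiteDimensional {𝕜 E F : Type*} [NontriviallyNormedField 𝕜]
    [CompleteSpace 𝕜] [NormedAddCommGroup E] [NormedSpace 𝕜 E] [FiniteDimensional 𝕜 E]
    [NormedAddCommGroup F] [NormedSpace 𝕜 F] (a : E →ᵃ[𝕜] F) (x : E) :
    HasFDerivAt a a.linear.toContinuousLinearMap x :=
  (ContinuousAffineMap.mk a a.continuous_of_finiteDimensional).hasFDerivAt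

variable {E : Type*} [NormedAddCommGroup E] [NormedSpace ℝ E] [FiniteDimensional ℝ E]
  {f : E → ℝ} {x : E}

theorem DifferentiableAt.fderiv_eq_of_supporting_affine {a : E →ᵃ[ℝ] ℝ}
    (hf : DifferentiableAt ℝ f x) (hle : ∀ y, a y ≤ f y) (hx : a x = f x) :
    fderiv ℝ f x = a.linear.toContinuousLinearMap := by
  have hmin : IsLocalMin (fun y => f y - a y) x :=
    Eventually.of_forall fun y => by simp only [hx, sub_self, sub_nonneg, hle y]
  exact sub_eq_zero.1 (hmin.hasFDerivAt_eq_zero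
    (hf.hasFDerivAt.sub (a.hasFDerivAt_of_finiteDimensional x)))

theorem not_differentiableAt_of_supporting_affine_linear_ne {a b : E →ᵃ[ℝ] ℝ}
    (ha : ∀ y, a y ≤ f y) (hb : ∀ y, b y ≤ f y) (hax : a x = f x) (hbx : b x = f x)
    (hab : a.linear ≠ b.linear) : ¬ DifferentiableAt ℝ f x := fun hf =>
  hab (LinearMap.toContinuousLinearMap.injective
    ((hf.fderiv_eq_of_supporting_affine ha hax).symm.trans
      (hf.fderiv_eq_of_supporting_affine hb hbx)))

end AffineMinorant

section DominanceRegion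

variable {E : Type*} [AddCommGroup E] [Module ℝ E] (A : Finset (E →ᵃ[ℝ] ℝ))

def dominanceRegion (a : E →ᵃ[ℝ] ℝ) : Set E :=
  {x | ∀ b ∈ A, b ≠ a → b x < a x}

variable {A} {a b : E →ᵃ[ℝ] ℝ} {x : E}

theorem mem_dominanceRegion : x ∈ dominanceRegion A a ↔ ∀ b ∈ A, b ≠ a → b x < a x :=
  Iff.rfl

theorem dominanceRegion_eq_biInter :
    dominanceRegion A a = ⋂ b ∈ A, ⋂ (_ : b ≠ a), {x | b x < a x} := by
  ext x
  simp only [mem_dominanceRegion, mem_iInter, mem_ofPred_eq]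

theorem convex_dominanceRegion : Convex ℝ (dominanceRegion A a) := by
  rw [dominanceRegion_eq_biInter]
  refine convex_iInter₂ fun b _ => convex_iInter fun _ => ?_
  simpa only [preimage, mem_Ioi, AffineMap.coe_sub, Pi.sub_apply, sub_pos] using
    (convex_Ioi 0).affine_preimage (a - b)

theorem disjoint_dominanceRegion (ha : a ∈ A) (hb : b ∈ A) (hab : a ≠ b) :
    Disjoint (dominanceRegion A a) (dominanceRegion A b) :=
  disjoint_left.2 fun _ hxa hxb =>
    (mem_dominanceRegion.1 hxa b hb hab.symm).asymm (mem_dominanceRegion.1 hxb a ha hab)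

theorem sup'_eq_of_mem_dominanceRegion (hA : A.Nonempty) (ha : a ∈ A)
    (hx : x ∈ dominanceRegion A a) : A.sup' hA (· x) = a x :=
  le_antisymm (Finset.sup'_le _ _ fun b hb => by
      rcases eq_or_ne b a with rfl | hba
      · exact le_rfl
      · exact (mem_dominanceRegion.1 hx b hb hba).le)
    (Finset.le_sup' (· x) ha)

theorem linear_ne_of_mem_dominanceRegion {y : E} (ha : a ∈ A) (hb : b ∈ A) (hab : a ≠ b)
    (hx : x ∈ dominanceRegion A a) (hy : y ∈ dominanceRegion A b) : a.linear ≠ b.linear := by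
  intro hlin
  have hxy : a x - a y = b x - b y := by
    rw [← vsub_eq_sub, ← a.linearMap_vsub, hlin, b.linearMap_vsub, vsub_eq_sub]
  have := mem_dominanceRegion.1 hx b hb hab.symm
  have := mem_dominanceRegion.1 hy a ha hab
  linarith

theorem exists_ne_eq_sup'_of_notMem_dominanceRegion (hA : A.Nonempty)
    (hx : ∀ a ∈ A, x ∉ dominanceRegion A a) :
    ∃ a ∈ A, ∃ b ∈ A, a ≠ b ∧ a x = A.sup' hA (· x) ∧ b x = A.sup' hA (· x) := by
  obtain ⟨a, ha, hmax⟩ := Finset.exists_mem_eq_sup' hA (· x)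
  obtain ⟨b, hb, hba, hab⟩ : ∃ b ∈ A, b ≠ a ∧ a x ≤ b x := by
    simpa only [mem_dominanceRegion, not_forall, not_lt, exists_prop] using hx a ha
  exact ⟨a, ha, b, hb, hba.symm, hmax.symm,
    le_antisymm (Finset.le_sup' (· x) hb) (hmax ▸ hab)⟩

theorem sup'_erase_eq_of_dominanceRegion_eq_empty [DecidableEq (E →ᵃ[ℝ] ℝ)]
    (hA : A.Nonempty) (hempty : dominanceRegion A a = ∅) (hA' : (A.erase a).Nonempty) (x : E) :
    (A.erase a).sup' hA' (· x) = A.sup' hA (· x) := by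
  refine le_antisymm (Finset.sup'_mono _ (A.erase_subset a) hA')
    (Finset.sup'_le _ _ fun c hc => ?_)
  rcases eq_or_ne c a with rfl | hca
  · obtain ⟨b, hb, hbc, hcb⟩ : ∃ b ∈ A, b ≠ c ∧ c x ≤ b x := by
      simpa only [mem_dominanceRegion, not_forall, not_lt, exists_prop] using
        (hempty.symm ▸ notMem_empty x : x ∉ dominanceRegion A c)
    exact hcb.trans (Finset.le_sup' (· x) (Finset.mem_erase.2 ⟨hbc, hb⟩))
  · exact Finset.le_sup' (· x) (Finset.mem_erase.2 ⟨hca, hc⟩)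

end DominanceRegion

section NonDifferentiabilityLocus

variable {E : Type*} [NormedAddCommGroup E] [NormedSpace ℝ E] [FiniteDimensional ℝ E]
  {A : Finset (E →ᵃ[ℝ] ℝ)}

theorem isOpen_dominanceRegion (a : E →ᵃ[ℝ] ℝ) : IsOpen (dominanceRegion A a) := by
  rw [dominanceRegion_eq_biInter]
  exact isOpen_biInter_finset fun b _ => isOpen_iInter_of_finite fun _ =>
    isOpen_lt b.continuous_of_finiteDimensional a.continuous_of_finiteDimensional

theorem compl_ndiff_eq_iUnion_dominanceRegion {f : E → ℝ} (hA : A.Nonempty)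
    (hf : ∀ x, f x = A.sup' hA (· x)) (hirr : ∀ a ∈ A, (dominanceRegion A a).Nonempty) :
    (Ndiff f)ᶜ = ⋃ a : A, dominanceRegion A a := by
  have hle : ∀ a ∈ A, ∀ y, a y ≤ f y := fun a ha y => (hf y).symm ▸ Finset.le_sup' (· y) ha
  ext x
  simp only [Ndiff, mem_compl_iff, mem_ofPred_eq, not_not, mem_iUnion, Subtype.exists,
    exists_prop]
  constructor
  · intro hdiff
    by_contra! hx
    obtain ⟨a, ha, b, hb, hab, hax, hbx⟩ := exists_ne_eq_sup'_of_notMem_dominanceRegion hA hx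
    obtain ⟨y, hy⟩ := hirr a ha
    obtain ⟨z, hz⟩ := hirr b hb
    exact not_differentiableAt_of_supporting_affine_linear_ne (hle a ha) (hle b hb)
      (hax.trans (hf x).symm) (hbx.trans (hf x).symm)
      (linear_ne_of_mem_dominanceRegion ha hb hab hy hz) hdiff
  · rintro ⟨a, ha, hx⟩
    have hfa : f =ᶠ[𝓝 x] a := eventuallyEq_of_mem ((isOpen_dominanceRegion a).mem_nhds hx)
      fun y hy => (hf y).trans (sup'_eq_of_mem_dominanceRegion hA ha hy)
    exact (a.hasFDerivAt_of_finiteDimensional x).differentiableAt.congr_of_eventuallyEq hfa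

end NonDifferentiabilityLocus

section MonomialLength

variable {E : Type*} [AddCommGroup E] [Module ℝ E] {f : E → ℝ} {A : Finset (E →ᵃ[ℝ] ℝ)}
  {a : E →ᵃ[ℝ] ℝ}

theorem exists_card_eq_mlen (hf : IsTropSig f) :
    ∃ (A : Finset (E →ᵃ[ℝ] ℝ)) (hA : A.Nonempty), A.card = mlen f ∧ ∀ x, f x = A.sup' hA (· x) := by
  obtain ⟨A, hA, hrep⟩ := hf
  exact Nat.sInf_mem (s := {k | ∃ (A : Finset (E →ᵃ[ℝ] ℝ)) (hA : A.Nonempty),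
    A.card = k ∧ ∀ x, f x = A.sup' hA (· x)}) ⟨A.card, A, hA, rfl, hrep⟩

theorem mlen_le_card (hA : A.Nonempty) (hf : ∀ x, f x = A.sup' hA (· x)) :
    mlen f ≤ A.card :=
  Nat.sInf_le ⟨A, hA, rfl, hf⟩

theorem dominanceRegion_nonempty_of_card_eq_mlen (hA : A.Nonempty)
    (hf : ∀ x, f x = A.sup' hA (· x)) (hcard : A.card = mlen f) (ha : a ∈ A) :
    (dominanceRegion A a).Nonempty := by
  classical
  by_contra hempty
  rw [not_nonempty_iff_eq_empty] at hempty
  rcases (A.erase a).eq_empty_or_nonempty with hA' | hA'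
  · have h0 : (0 : E) ∈ dominanceRegion A a := fun b hb hba =>
      absurd (Finset.mem_erase.2 ⟨hba, hb⟩) (hA' ▸ Finset.notMem_empty b)
    exact hempty.subset h0
  · have hle := mlen_le_card hA' fun x =>
      (hf x).trans (sup'_erase_eq_of_dominanceRegion_eq_empty hA hempty hA' x).symm
    rw [Finset.card_erase_of_mem ha, ← hcard] at hle
    have hpos := A.card_pos.2 hA
    omega

end MonomialLength

theorem mlen_eq_number_of_linear_regions
    (n : ℕ) (f : (Fin n → ℝ) → ℝ) (hf : IsTropSig f) :
    (∀ x ∉ Ndiff f,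
      IsOpen (connectedComponentIn (Ndiff f)ᶜ x) ∧
      Convex ℝ (connectedComponentIn (Ndiff f)ᶜ x) ∧
      ∃ ℓ : (Fin n → ℝ) →ᵃ[ℝ] ℝ, ∀ y ∈ connectedComponentIn (Ndiff f)ᶜ x, f y = ℓ y) ∧
    Nat.card (ConnectedComponents ↥(Ndiff f)ᶜ) = mlen f := by
  obtain ⟨A, hA, hcard, hrep⟩ := exists_card_eq_mlen hf
  have hirr : ∀ a ∈ A, (dominanceRegion A a).Nonempty := fun a ha =>
    dominanceRegion_nonempty_of_card_eq_mlen hA hrep hcard ha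
  have hcover := (compl_ndiff_eq_iUnion_dominanceRegion hA hrep hirr).symm
  have hopen : ∀ a : A, IsOpen (dominanceRegion A a) := fun a =>
    isOpen_dominanceRegion (A := A) a
  have hdisj : Pairwise (Disjoint on fun a : A => dominanceRegion A a) := fun a b hab =>
    disjoint_dominanceRegion a.2 b.2 (Subtype.coe_ne_coe.2 hab)
  refine ⟨fun x hx => ?_, ?_⟩
  · obtain ⟨a, hxa⟩ := mem_iUnion.1 (hcover ▸ hx : x ∈ ⋃ a : A, dominanceRegion A a)
    rw [connectedComponentIn_eq_of_iUnion_eq hcover hopen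
      (fun _ => convex_dominanceRegion.isPreconnected) hdisj hxa]
    exact ⟨hopen a, convex_dominanceRegion, a, fun y hy =>
      (hrep y).trans (sup'_eq_of_mem_dominanceRegion hA a.2 hy)⟩
  · rw [nat_card_connectedComponents_of_iUnion_eq hcover hopen
      (fun a => convex_dominanceRegion.isConnected (hirr a a.2)) hdisj,
      Nat.card_eq_finsetCard, hcard]
end
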